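/- arXiv:2311.02856 — 4 statements merged into one kernel-verified Lean document; each statement's English description precedes it below -/
import Mathlib

section
/- Fix K ≥ t ≥ 1 and set F = C(K,t). Define an F × K array P indexed by (τ, j) with τ a t-subset of [K] and j ∈ [K], where p_{τ,j} = τ ∪ {j} (viewed as an element of the set of (t+1)-subsets of [K]) if j ∉ τ, and p_{τ,j} = * if j ∈ τ. Then P is a (t+1)-regular [K, C(K,t), C(K−1,t−1), C(K,t+1)]-PDA: each column contains exactly C(K−1,t−1) stars, each (t+1)-subset appears exactly t+1 times as an entry, and whenever p_{τ1,j1} = p_{τ2,j2} is a non-star entry with (τ1,j1) ≠ (τ2,j2), we have τ1 ≠ τ2, j1 ≠ j2, and p_{τ1,j2} = p_{τ2,j1} = *. -/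
open Finset

section

variable {α : Type*} [DecidableEq α]

theorem card_filter_card_eq_and_mem [Fintype α] (a : α) {k : ℕ} (hk : 1 ≤ k) :
    #{s : Finset α | s.card = k ∧ a ∈ s} = (Fintype.card α - 1).choose (k - 1) := by
  have hfilter : ({s : Finset α | s.card = k ∧ a ∈ s} : Finset (Finset α))
      = (univ.powersetCard k).filter ({a} ⊆ ·) := by
    ext s
    simp [singleton_subset_iff]
  rw [hfilter, card_filter_powersetCard_subset _ _ _ (subset_univ _) (by simpa using hk)]
  simp

theorem card_filter_insert_eq [Fintype α] {S : Finset α} {k : ℕ} (hS : S.card = k + 1) :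
    #{p : Finset α × α | p.1.card = k ∧ p.2 ∉ p.1 ∧ insert p.2 p.1 = S} = k + 1 := by
  have hfilter : ({p : Finset α × α | p.1.card = k ∧ p.2 ∉ p.1 ∧ insert p.2 p.1 = S} :
      Finset (Finset α × α)) = S.image fun j => (S.erase j, j) := by
    ext ⟨τ, j⟩
    simp only [mem_filter, mem_univ, true_and, mem_image, Prod.mk.injEq]
    constructor
    · rintro ⟨-, hj, rfl⟩
      exact ⟨j, mem_insert_self j τ, erase_insert hj, rfl⟩
    · rintro ⟨j, hj, rfl, rfl⟩
      exact ⟨by rw [card_erase_of_mem hj, hS]; rfl, notMem_erase j S, insert_erase hj⟩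
  rw [hfilter, card_image_of_injective _ fun _ _ h => (Prod.mk.inj h).2, hS]

theorem cross_of_insert_eq_insert {τ₁ τ₂ : Finset α} {j₁ j₂ : α} (h₁ : j₁ ∉ τ₁) (h₂ : j₂ ∉ τ₂)
    (h : insert j₁ τ₁ = insert j₂ τ₂) (hne : (τ₁, j₁) ≠ (τ₂, j₂)) :
    τ₁ ≠ τ₂ ∧ j₁ ≠ j₂ ∧ j₂ ∈ τ₁ ∧ j₁ ∈ τ₂ := by
  have hj : j₁ ≠ j₂ := by
    rintro rfl
    exact hne (by rw [← erase_insert h₁, h, erase_insert h₂])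
  have hj₂ : j₂ ∈ τ₁ := (mem_insert.1 (h ▸ mem_insert_self j₂ τ₂)).resolve_left hj.symm
  have hj₁ : j₁ ∈ τ₂ := (mem_insert.1 (h ▸ mem_insert_self j₁ τ₁)).resolve_left hj
  exact ⟨fun he => h₁ (he ▸ hj₁), hj, hj₂, hj₁⟩

end

theorem man_pda_general (K t : ℕ) (ht : 1 ≤ t) :
    (∀ j : Fin K,
      (Finset.univ.filter (fun τ : Finset (Fin K) => τ.card = t ∧ j ∈ τ)).card
        = (K - 1).choose (t - 1)) ∧
    (∀ S : Finset (Fin K), S.card = t + 1 →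
      (Finset.univ.filter (fun p : Finset (Fin K) × Fin K =>
        p.1.card = t ∧ p.2 ∉ p.1 ∧ insert p.2 p.1 = S)).card = t + 1) ∧
    (∀ τ₁ τ₂ : Finset (Fin K), ∀ j₁ j₂ : Fin K,
      τ₁.card = t → τ₂.card = t → j₁ ∉ τ₁ → j₂ ∉ τ₂ →
      insert j₁ τ₁ = insert j₂ τ₂ → (τ₁, j₁) ≠ (τ₂, j₂) →
      τ₁ ≠ τ₂ ∧ j₁ ≠ j₂ ∧ j₂ ∈ τ₁ ∧ j₁ ∈ τ₂) :=
  ⟨fun j => by simpa using card_filter_card_eq_and_mem j ht,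
    fun _ hS => card_filter_insert_eq hS,
    fun _ _ _ _ _ _ h₁ h₂ h hne => cross_of_insert_eq_insert h₁ h₂ h hne⟩

/-- The MAN array (rows = t-subsets τ of [K], columns = j ∈ [K],
entry τ ∪ {j} if j ∉ τ, star if j ∈ τ) is a (t+1)-regular
[K, C(K,t), C(K−1,t−1), C(K,t+1)]-PDA: each column has exactly C(K−1,t−1)
stars, each (t+1)-subset occurs exactly t+1 times as an entry, and equal
non-star entries satisfy the PDA cross condition. -/
theorem man_pda (K t : ℕ) (ht : 1 ≤ t) (htK : t ≤ K) :
    (∀ j : Fin K,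
      (Finset.univ.filter (fun τ : Finset (Fin K) => τ.card = t ∧ j ∈ τ)).card
        = (K - 1).choose (t - 1)) ∧
    (∀ S : Finset (Fin K), S.card = t + 1 →
      (Finset.univ.filter (fun p : Finset (Fin K) × Fin K =>
        p.1.card = t ∧ p.2 ∉ p.1 ∧ insert p.2 p.1 = S)).card = t + 1) ∧
    (∀ τ₁ τ₂ : Finset (Fin K), ∀ j₁ j₂ : Fin K,
      τ₁.card = t → τ₂.card = t → j₁ ∉ τ₁ → j₂ ∉ τ₂ →
      insert j₁ τ₁ = insert j₂ τ₂ → (τ₁, j₁) ≠ (τ₂, j₂) →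
      τ₁ ≠ τ₂ ∧ j₁ ≠ j₂ ∧ j₂ ∈ τ₁ ∧ j₁ ∈ τ₂) :=
  man_pda_general K t ht
end

section
/- Let t ≥ 2, s ∈ [t−1], and fix i. Define an array B_{(s,i)} of size C(t,s) × t indexed by ((Y,i), j) with Y an s-subset of [t] and j ∈ [t], where the entry is * if j ∈ Y and (Y ∪ {j}, i) if j ∉ Y. Then B_{(s,i)} is an (s+1)-regular [t, C(t,s), C(t−1,s−1), C(t,s+1)]-PDA. -/
/-- For t ≥ 2 and s ∈ [t−1], the array B_{(s,i)} (rows = s-subsets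
Y of [t], columns = j ∈ [t], entry * if j ∈ Y, symbol (Y ∪ {j}, i) otherwise)
is an (s+1)-regular [t, C(t,s), C(t−1,s−1), C(t,s+1)]-PDA. -/
theorem B_si_is_pda (t s i : ℕ) (ht : 2 ≤ t) (hs1 : 1 ≤ s) (hs : s ≤ t - 1) :
    (∀ j : Fin t,
      (Finset.univ.filter (fun Y : Finset (Fin t) => Y.card = s ∧ j ∈ Y)).card
        = (t - 1).choose (s - 1)) ∧
    (∀ U : Finset (Fin t), U.card = s + 1 →
      (Finset.univ.filter (fun p : Finset (Fin t) × Fin t =>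
        p.1.card = s ∧ p.2 ∉ p.1 ∧ (insert p.2 p.1, i) = (U, i))).card = s + 1) ∧
    (∀ Y₁ Y₂ : Finset (Fin t), ∀ j₁ j₂ : Fin t,
      Y₁.card = s → Y₂.card = s → j₁ ∉ Y₁ → j₂ ∉ Y₂ →
      (insert j₁ Y₁, i) = (insert j₂ Y₂, i) → (Y₁, j₁) ≠ (Y₂, j₂) →
      Y₁ ≠ Y₂ ∧ j₁ ≠ j₂ ∧ j₂ ∈ Y₁ ∧ j₁ ∈ Y₂) := by
  refine ⟨?_, ?_, ?_⟩
  · intro j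
    have h1 : ((Finset.univ.erase j).powersetCard (s-1)).card = (t-1).choose (s-1) := by
      rw [Finset.card_powersetCard, Finset.card_erase_of_mem (Finset.mem_univ j),
        Finset.card_univ, Fintype.card_fin]
    rw [← h1]
    apply Finset.card_bij' (fun Y _ => Y.erase j) (fun Z _ => insert j Z)
    · intro Y hY
      simp only [Finset.mem_filter, Finset.mem_univ, true_and] at hY
      rw [Finset.insert_erase hY.2]
    · intro Z hZ
      simp only [Finset.mem_powersetCard] at hZ
      have hjZ : j ∉ Z := fun h => (Finset.mem_erase.mp (hZ.1 h)).1 rfl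
      rw [Finset.erase_insert hjZ]
    · intro Y hY
      simp only [Finset.mem_filter, Finset.mem_univ, true_and] at hY
      rw [Finset.mem_powersetCard]
      refine ⟨fun x hx => Finset.mem_erase.mpr ⟨(Finset.mem_erase.mp hx).1, Finset.mem_univ x⟩,
        by rw [Finset.card_erase_of_mem hY.2, hY.1]⟩
    · intro Z hZ
      simp only [Finset.mem_powersetCard] at hZ
      have hjZ : j ∉ Z := fun h => (Finset.mem_erase.mp (hZ.1 h)).1 rfl
      simp only [Finset.mem_filter, Finset.mem_univ, true_and]
      exact ⟨by rw [Finset.card_insert_of_notMem hjZ, hZ.2, Nat.sub_add_cancel hs1],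
        Finset.mem_insert_self j Z⟩
  · intro U hU
    rw [← hU]
    apply Finset.card_bij' (fun p _ => p.2) (fun j hj => (U.erase j, j))
    · intro p hp
      simp only [Finset.mem_filter, Finset.mem_univ, true_and, Prod.mk.injEq] at hp
      rw [← hp.2.2.1]
      exact Finset.mem_insert_self p.2 p.1
    · intro j hj
      simp only [Finset.mem_filter, Finset.mem_univ, true_and, Prod.mk.injEq]
      exact ⟨by simp [Finset.card_erase_of_mem hj, hU], Finset.notMem_erase j U,
        Finset.insert_erase hj, trivial⟩
    · intro p hp
      simp only [Finset.mem_filter, Finset.mem_univ, true_and, Prod.mk.injEq] at hp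
      obtain ⟨hc, hnm, hins, -⟩ := hp
      have : p.1 = U.erase p.2 := by rw [← hins, Finset.erase_insert hnm]
      rw [Prod.ext_iff]
      exact ⟨this.symm, rfl⟩
    · intro j hj; rfl
  · intro Y₁ Y₂ j₁ j₂ h1 h2 hn1 hn2 heq hne
    have hins : insert j₁ Y₁ = insert j₂ Y₂ := (Prod.mk.injEq _ _ _ _ ▸ heq).1
    have hjne : j₁ ≠ j₂ := by
      intro h
      subst h
      have : Y₁ = Y₂ := by
        rw [← Finset.erase_insert hn1, ← Finset.erase_insert hn2, hins]
      exact hne (by rw [this])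
    have hj2 : j₂ ∈ Y₁ := by
      have : j₂ ∈ insert j₁ Y₁ := hins ▸ Finset.mem_insert_self j₂ Y₂
      rcases Finset.mem_insert.mp this with h | h
      · exact absurd h.symm hjne
      · exact h
    have hj1 : j₁ ∈ Y₂ := by
      have : j₁ ∈ insert j₂ Y₂ := hins ▸ Finset.mem_insert_self j₁ Y₁
      rcases Finset.mem_insert.mp this with h | h
      · exact absurd h hjne
      · exact h
    exact ⟨fun h => hn2 (h ▸ hj2), hjne, hj2, hj1⟩
end

section
/- Let t ≥ 2 and choose nonnegative integers a_s for s ∈ [t−1]. Form the array B of size (Σ_{s=1}^{t−1} a_s·C(t,s)) × t by vertically stacking the arrays B_{(s,i)} for s ∈ [t−1] and i ∈ [a_s], where B_{(s,i)} has rows indexed by pairs (Y,i) with Y an s-subset of [t], entry * if j ∈ Y and entry (Y ∪ {j}, i) if j ∉ Y. Then B is a [t, Σ_s a_s·C(t,s), Σ_s a_s·C(t−1,s−1), Σ_s a_s·C(t,s+1)]-PDA. -/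
/-- The row-index set of the stacked array B: triples (s, i, Y) with
s ∈ [t−1], i ∈ [a_s], and Y an s-subset of [t]. -/
def stackedRows (t : ℕ) (a : ℕ → ℕ) : Finset (ℕ × ℕ × Finset (Fin t)) :=
  (Finset.Icc 1 (t - 1)).biUnion (fun s =>
    (Finset.Icc 1 (a s)).biUnion (fun i =>
      (Finset.univ.filter (fun Y : Finset (Fin t) => Y.card = s)).image
        (fun Y => (s, i, Y))))

lemma card_subsets_mem (t s : ℕ) (hs : 1 ≤ s) (j : Fin t) :
    ((Finset.univ.filter (fun Y : Finset (Fin t) => Y.card = s)).filter (fun Y => j ∈ Y)).card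
      = (t - 1).choose (s - 1) := by
  have h : ((Finset.univ.filter (fun Y : Finset (Fin t) => Y.card = s)).filter (fun Y => j ∈ Y)).card
      = (Finset.powersetCard (s-1) (Finset.univ.erase j)).card := by
    apply Finset.card_bij (fun Y _ => Y.erase j)
    · intro Y hY
      simp only [Finset.mem_filter] at hY
      rw [Finset.mem_powersetCard]
      refine ⟨fun x hx => Finset.mem_erase.mpr ⟨(Finset.mem_erase.mp hx).1, Finset.mem_univ x⟩, ?_⟩
      rw [Finset.card_erase_of_mem hY.2, hY.1.2]
    · intro Y hY Y' hY' h
      simp only [Finset.mem_filter] at hY hY'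
      rw [← Finset.insert_erase hY.2, ← Finset.insert_erase hY'.2, h]
    · intro Z hZ
      rw [Finset.mem_powersetCard] at hZ
      have hjZ : j ∉ Z := fun h => (Finset.mem_erase.mp (hZ.1 h)).1 rfl
      refine ⟨insert j Z, ?_, ?_⟩
      · simp [Finset.mem_filter, Finset.card_insert_of_notMem hjZ, hZ.2]
        omega
      · rw [Finset.erase_insert hjZ]
  rw [h, Finset.card_powersetCard, Finset.card_erase_of_mem (Finset.mem_univ j)]
  simp

lemma mem_stackedRows {t : ℕ} {a : ℕ → ℕ} {r : ℕ × ℕ × Finset (Fin t)} :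
    r ∈ stackedRows t a ↔ r.1 ∈ Finset.Icc 1 (t-1) ∧ r.2.1 ∈ Finset.Icc 1 (a r.1) ∧ r.2.2.card = r.1 := by
  obtain ⟨s, i, Y⟩ := r
  simp only [stackedRows, Finset.mem_biUnion, Finset.mem_image, Finset.mem_filter]
  constructor
  · rintro ⟨s', hs', i', hi', Y', ⟨-, hY'⟩, h⟩
    rw [Prod.mk.injEq, Prod.mk.injEq] at h
    obtain ⟨rfl, rfl, rfl⟩ := h
    exact ⟨hs', hi', hY'⟩
  · rintro ⟨hs, hi, hY⟩
    exact ⟨s, hs, i, hi, Y, ⟨Finset.mem_univ _, hY⟩, rfl⟩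

lemma mem_inner {t s i : ℕ} {x : ℕ × ℕ × Finset (Fin t)}
    (hx : x ∈ (Finset.univ.filter (fun Y : Finset (Fin t) => Y.card = s)).image (fun Y => (s, i, Y))) :
    x.1 = s ∧ x.2.1 = i := by
  simp only [Finset.mem_image] at hx
  obtain ⟨Y, -, rfl⟩ := hx
  exact ⟨rfl, rfl⟩

lemma mem_inner2 {t s i : ℕ} {x : Finset (Fin t) × ℕ}
    (hx : x ∈ (Finset.univ.filter (fun Y' : Finset (Fin t) => Y'.card = s+1)).image (fun Y' => (Y', i))) :
    x.1.card = s + 1 ∧ x.2 = i := by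
  simp only [Finset.mem_image, Finset.mem_filter] at hx
  obtain ⟨Y', ⟨-, h⟩, rfl⟩ := hx
  exact ⟨h, rfl⟩

lemma row_inj {t s i : ℕ} : Function.Injective (fun Y : Finset (Fin t) => (s, i, Y)) := by
  intro Y Y' h
  simpa using h

/-- The stacked array B (entry at row (s,i,Y), column j is * if
j ∈ Y and the symbol (Y ∪ {j}, i) otherwise) is a
[t, Σ_s a_s·C(t,s), Σ_s a_s·C(t−1,s−1), Σ_s a_s·C(t,s+1)]-PDA. -/
theorem stacked_B_is_pda (t : ℕ) (ht : 2 ≤ t) (a : ℕ → ℕ) :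
    -- F' : number of rows
    ((stackedRows t a).card = ∑ s ∈ Finset.Icc 1 (t - 1), a s * t.choose s) ∧
    -- Z' : stars per column
    (∀ j : Fin t,
      ((stackedRows t a).filter (fun r => j ∈ r.2.2)).card
        = ∑ s ∈ Finset.Icc 1 (t - 1), a s * (t - 1).choose (s - 1)) ∧
    -- S : number of distinct symbols, each appearing (at least once, by
    -- definition of the image)
    (((stackedRows t a).biUnion (fun r =>
        (Finset.univ.filter (fun j : Fin t => j ∉ r.2.2)).image
          (fun j => (insert j r.2.2, r.2.1)))).card
      = ∑ s ∈ Finset.Icc 1 (t - 1), a s * t.choose (s + 1)) ∧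
    -- C3 : the PDA cross condition for equal non-star entries
    (∀ r₁ ∈ stackedRows t a, ∀ r₂ ∈ stackedRows t a, ∀ j₁ j₂ : Fin t,
      j₁ ∉ r₁.2.2 → j₂ ∉ r₂.2.2 →
      (insert j₁ r₁.2.2, r₁.2.1) = (insert j₂ r₂.2.2, r₂.2.1) →
      (r₁, j₁) ≠ (r₂, j₂) →
      r₁ ≠ r₂ ∧ j₁ ≠ j₂ ∧ j₂ ∈ r₁.2.2 ∧ j₁ ∈ r₂.2.2) := by
  refine ⟨?_, ?_, ?_, ?_⟩
  · -- F' : number of rows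
    rw [stackedRows, Finset.card_biUnion]
    · refine Finset.sum_congr rfl (fun s hs => ?_)
      rw [Finset.card_biUnion]
      · simp [Finset.card_image_of_injective _ row_inj]
      · intro i _ i' _ hne
        refine Finset.disjoint_left.mpr (fun x hx hx' => hne ?_)
        rw [← (mem_inner hx).2, (mem_inner hx').2]
    · intro s _ s' _ hne
      refine Finset.disjoint_left.mpr (fun x hx hx' => hne ?_)
      obtain ⟨i, -, hx⟩ := Finset.mem_biUnion.mp hx
      obtain ⟨i', -, hx'⟩ := Finset.mem_biUnion.mp hx'
      rw [← (mem_inner hx).1, (mem_inner hx').1]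
  · -- Z' : stars per column
    intro j
    rw [stackedRows, Finset.filter_biUnion, Finset.card_biUnion]
    · refine Finset.sum_congr rfl (fun s hs => ?_)
      rw [Finset.filter_biUnion, Finset.card_biUnion]
      · have hs1 : 1 ≤ s := (Finset.mem_Icc.mp hs).1
        have : ∀ i : ℕ, (((Finset.univ.filter (fun Y : Finset (Fin t) => Y.card = s)).image
            (fun Y => (s, i, Y))).filter (fun r => j ∈ r.2.2)).card = (t-1).choose (s-1) := by
          intro i
          rw [Finset.filter_image, Finset.card_image_of_injective _ row_inj]
          exact card_subsets_mem t s hs1 j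
        simp only [this, Finset.sum_const, Nat.card_Icc, smul_eq_mul]
        simp
      · intro i _ i' _ hne
        refine Finset.disjoint_left.mpr (fun x hx hx' => hne ?_)
        rw [← (mem_inner (Finset.mem_of_mem_filter _ hx)).2,
          (mem_inner (Finset.mem_of_mem_filter _ hx')).2]
    · intro s _ s' _ hne
      refine Finset.disjoint_left.mpr (fun x hx hx' => hne ?_)
      obtain ⟨i, -, hx⟩ := Finset.mem_biUnion.mp (Finset.mem_of_mem_filter _ hx)
      obtain ⟨i', -, hx'⟩ := Finset.mem_biUnion.mp (Finset.mem_of_mem_filter _ hx')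
      rw [← (mem_inner hx).1, (mem_inner hx').1]
  · -- S : number of distinct symbols
    have hT : ((stackedRows t a).biUnion (fun r =>
          (Finset.univ.filter (fun j : Fin t => j ∉ r.2.2)).image
            (fun j => (insert j r.2.2, r.2.1))))
        = (Finset.Icc 1 (t-1)).biUnion (fun s => (Finset.Icc 1 (a s)).biUnion (fun i =>
            (Finset.univ.filter (fun Y' : Finset (Fin t) => Y'.card = s+1)).image (fun Y' => (Y', i)))) := by
      ext x
      simp only [Finset.mem_biUnion, Finset.mem_image, Finset.mem_filter, Finset.mem_univ, true_and]
      constructor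
      · rintro ⟨r, hr, j, hj, rfl⟩
        obtain ⟨h1, h2, h3⟩ := mem_stackedRows.mp hr
        exact ⟨r.1, h1, r.2.1, h2, insert j r.2.2, by rw [Finset.card_insert_of_notMem hj, h3], rfl⟩
      · rintro ⟨s, hs, i, hi, Y', hY', rfl⟩
        have hne : Y'.Nonempty := Finset.card_pos.mp (by omega)
        obtain ⟨j, hj⟩ := hne
        refine ⟨(s, i, Y'.erase j), mem_stackedRows.mpr ⟨hs, hi, ?_⟩, j, Finset.notMem_erase j Y', ?_⟩
        · simp [Finset.card_erase_of_mem hj, hY']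
        · simp [Finset.insert_erase hj]
    rw [hT, Finset.card_biUnion]
    · refine Finset.sum_congr rfl (fun s hs => ?_)
      rw [Finset.card_biUnion]
      · have : ∀ i : ℕ, ((Finset.univ.filter (fun Y' : Finset (Fin t) => Y'.card = s+1)).image
            (fun Y' => (Y', i))).card = t.choose (s+1) := by
          intro i
          rw [Finset.card_image_of_injective _ (fun Y Y' h => by simpa using h)]
          rw [← Finset.powerset_univ, ← Finset.powersetCard_eq_filter]
          simp [Finset.card_powersetCard]
        simp only [this, Finset.sum_const, Nat.card_Icc, smul_eq_mul]
        simp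
      · intro i _ i' _ hne
        refine Finset.disjoint_left.mpr (fun x hx hx' => hne ?_)
        rw [← (mem_inner2 hx).2, (mem_inner2 hx').2]
    · intro s _ s' _ hne
      refine Finset.disjoint_left.mpr (fun x hx hx' => hne ?_)
      obtain ⟨i, -, hx⟩ := Finset.mem_biUnion.mp hx
      obtain ⟨i', -, hx'⟩ := Finset.mem_biUnion.mp hx'
      have := (mem_inner2 hx).1
      have := (mem_inner2 hx').1
      omega
  · -- C3
    intro r₁ hr₁ r₂ hr₂ j₁ j₂ hj₁ hj₂ heq hne
    obtain ⟨h11, h12, h13⟩ := mem_stackedRows.mp hr₁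
    obtain ⟨h21, h22, h23⟩ := mem_stackedRows.mp hr₂
    rw [Prod.mk.injEq] at heq
    obtain ⟨hins, hi⟩ := heq
    have hcard : r₁.2.2.card = r₂.2.2.card := by
      have := congrArg Finset.card hins
      rw [Finset.card_insert_of_notMem hj₁, Finset.card_insert_of_notMem hj₂] at this
      omega
    have hjne : j₁ ≠ j₂ := by
      rintro rfl
      have hY : r₁.2.2 = r₂.2.2 := by
        rw [← Finset.erase_insert hj₁, ← Finset.erase_insert hj₂, hins]
      apply hne
      have : r₁ = r₂ := by
        obtain ⟨s₁, i₁, Y₁⟩ := r₁; obtain ⟨s₂, i₂, Y₂⟩ := r₂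
        simp_all
      rw [this]
    have hj2r1 : j₂ ∈ r₁.2.2 := by
      have : j₂ ∈ insert j₁ r₁.2.2 := hins ▸ Finset.mem_insert_self j₂ r₂.2.2
      rcases Finset.mem_insert.mp this with h | h
      · exact absurd h.symm hjne
      · exact h
    have hj1r2 : j₁ ∈ r₂.2.2 := by
      have : j₁ ∈ insert j₂ r₂.2.2 := hins ▸ Finset.mem_insert_self j₁ r₁.2.2
      rcases Finset.mem_insert.mp this with h | h
      · exact absurd h hjne
      · exact h
    refine ⟨?_, hjne, hj2r1, hj1r2⟩
    intro h
    rw [← h] at hj1r2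
    exact hj₁ hj1r2
end

section
/- Consider the (s+1)-regular PDA B_{(s,i)} on t columns (t ≥ 2, 1 ≤ s ≤ t−1) and a positive integer z. There exists a subset T of the symbol set of B_{(s,i)} such that every column of B_{(s,i)} contains at most z symbols from T, and |T| = floor(t/(s+1))·z if z < C(t−1,s), while |T| = C(t,s+1) if z ≥ C(t−1,s). -/
/-!
Among all families of `N` distinct `k`-subsets of an `n`-set, take one minimising the total
excess `∑ₓ (deg x - z)₊`. If some `p` has degree `> z`, then, as the degrees sum to
`N * k ≤ n * z`, some `q` has degree `< z`; since `deg q < deg p`, some member `U ∋ p` with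
`q ∉ U` can be replaced by `U - p + q` without hitting another member, and this lowers the
excess. For `k = s + 1`, `n = t`, both `N = ⌊t/(s+1)⌋ * z` (when `z < C(t-1,s)`) and
`N = C(t,s+1)` (otherwise) satisfy `N * k ≤ n * z` and `N ≤ C(n,k)`, by
`t * C(t-1,s) = C(t,s+1) * (s+1)`.
-/

open Finset

namespace SetFamily

variable {α : Type*} [DecidableEq α]

def degree (T : Finset (Finset α)) (x : α) : ℕ := #{U ∈ T | x ∈ U}

def excess [Fintype α] (T : Finset (Finset α)) (z : ℕ) : ℕ := ∑ x, (degree T x - z)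

lemma sum_degree [Fintype α] (T : Finset (Finset α)) : ∑ x, degree T x = ∑ U ∈ T, #U := by
  simp only [degree, card_filter]
  rw [sum_comm]
  refine sum_congr rfl fun U _ => ?_
  rw [sum_ite_mem, univ_inter, sum_const, smul_eq_mul, mul_one]

lemma exists_degree_lt_of_lt_degree [Fintype α] {T : Finset (Finset α)} {z : ℕ}
    (hsum : ∑ U ∈ T, #U ≤ Fintype.card α * z) {p : α} (hp : z < degree T p) :
    ∃ q, degree T q < z := by
  by_contra! h
  have : ∑ _x : α, z < ∑ x, degree T x := sum_lt_sum (fun x _ => h x) ⟨p, mem_univ p, hp⟩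
  rw [sum_const, card_univ, smul_eq_mul, sum_degree] at this
  omega

lemma degree_eq_card_add_card (T : Finset (Finset α)) (x y : α) :
    degree T x = #{U ∈ T | x ∈ U ∧ y ∉ U} + #{U ∈ T | x ∈ U ∧ y ∈ U} := by
  rw [degree, ← card_filter_add_card_filter_not (s := {U ∈ T | x ∈ U}) (y ∈ ·), add_comm,
    filter_filter, filter_filter]

lemma injOn_insert_erase {p q : α} :
    Set.InjOn (fun U : Finset α => insert q (U.erase p)) {U | p ∈ U ∧ q ∉ U} := by
  intro U ⟨hpU, hqU⟩ V ⟨hpV, hqV⟩ hUV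
  have hUV' : U.erase p = V.erase p := by
    simpa [erase_insert (fun h => hqU (mem_of_mem_erase h)),
      erase_insert (fun h => hqV (mem_of_mem_erase h))] using congrArg (·.erase q) hUV
  rw [← insert_erase hpU, hUV', insert_erase hpV]

lemma exists_shift_notMem {T : Finset (Finset α)} {p q : α}
    (h : degree T q < degree T p) :
    ∃ U ∈ T, p ∈ U ∧ q ∉ U ∧ insert q (U.erase p) ∉ T := by
  by_contra! hshift
  -- otherwise the shift `U ↦ U - p + q` injects the members through `p` avoiding `q` into the
  -- members through `q` avoiding `p`, which are fewer
  have hcomm : #{U ∈ T | q ∈ U ∧ p ∈ U} = #{U ∈ T | p ∈ U ∧ q ∈ U} := by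
    simp_rw [and_comm]
  have hmaps : Set.MapsTo (fun U : Finset α => insert q (U.erase p))
      ↑({U ∈ T | p ∈ U ∧ q ∉ U}) ↑({U ∈ T | q ∈ U ∧ p ∉ U}) := by
    intro U hU
    simp only [coe_filter, Set.mem_ofPred_eq] at hU ⊢
    have hpq : p ≠ q := fun hpq => hU.2.2 (hpq ▸ hU.2.1)
    exact ⟨hshift U hU.1 hU.2.1 hU.2.2, mem_insert_self q _, by simp [hpq]⟩
  have := card_le_card_of_injOn _ hmaps
    (injOn_insert_erase.mono fun U hU => (mem_filter.mp hU).2)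
  rw [degree_eq_card_add_card T p q, degree_eq_card_add_card T q p, hcomm] at h
  omega

lemma degree_insert_erase {T : Finset (Finset α)} {U V : Finset α} (hU : U ∈ T) (hV : V ∉ T)
    (x : α) :
    degree (insert V (T.erase U)) x + (if x ∈ U then 1 else 0)
      = degree T x + (if x ∈ V then 1 else 0) := by
  have herase : #({W ∈ T | x ∈ W}.erase U) + (if x ∈ U then 1 else 0) = degree T x := by
    split_ifs with hxU
    · exact card_erase_add_one (mem_filter.mpr ⟨hU, hxU⟩)
    · rw [erase_eq_of_notMem (s := {W ∈ T | x ∈ W}) fun h => hxU (mem_filter.mp h).2, add_zero,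
        degree]
  have hinsert : degree (insert V (T.erase U)) x
      = #({W ∈ T | x ∈ W}.erase U) + (if x ∈ V then 1 else 0) := by
    rw [degree, filter_insert, filter_erase]
    split_ifs
    · exact card_insert_of_notMem fun h => hV (mem_filter.mp (mem_of_mem_erase h)).1
    · rfl
  omega

lemma excess_shift_lt [Fintype α] {T : Finset (Finset α)} {U : Finset α} {p q : α} {z : ℕ}
    (hU : U ∈ T) (hpU : p ∈ U) (hqU : q ∉ U) (hshift : insert q (U.erase p) ∉ T)
    (hp : z < degree T p) (hq : degree T q < z) :
    excess (insert (insert q (U.erase p)) (T.erase U)) z < excess T z := by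
  have hpq : p ≠ q := by rintro rfl; exact hqU hpU
  have hpV : p ∉ insert q (U.erase p) := by simp [hpq]
  refine sum_lt_sum (fun x _ => ?_) ⟨p, mem_univ p, ?_⟩
  · have hx := degree_insert_erase hU hshift x
    by_cases hxq : x = q
    · subst hxq
      simp only [hqU, mem_insert_self, if_true, if_false] at hx
      omega
    · by_cases hxp : x = p
      · subst hxp
        simp only [hpU, hpV, if_true, if_false] at hx
        omega
      · simp only [mem_insert, mem_erase, hxq, hxp, ne_eq, not_false_eq_true, true_and,
          false_or] at hx
        split_ifs at hx <;> omega
  · have hx := degree_insert_erase hU hshift p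
    simp only [hpU, hpV, if_true, if_false] at hx
    omega

theorem exists_uniform_family_degree_le [Fintype α] {k N z : ℕ}
    (hN : N ≤ (Fintype.card α).choose k) (hsum : N * k ≤ Fintype.card α * z) :
    ∃ T : Finset (Finset α), (∀ U ∈ T, #U = k) ∧ (∀ x, degree T x ≤ z) ∧ #T = N := by
  have hne : (powersetCard N (powersetCard k (univ : Finset α))).Nonempty := by
    rwa [powersetCard_nonempty, card_powersetCard, card_univ]
  obtain ⟨T, hT, hmin⟩ := exists_min_image _ (excess · z) hne
  obtain ⟨hTk, hTN⟩ := mem_powersetCard.mp hT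
  have hcard : ∀ U ∈ T, #U = k := fun U hU => mem_powersetCard_univ.mp (hTk hU)
  refine ⟨T, hcard, fun p => ?_, hTN⟩
  by_contra! hp
  obtain ⟨q, hq⟩ := exists_degree_lt_of_lt_degree (by rwa [sum_congr rfl hcard, sum_const,
    smul_eq_mul, hTN]) hp
  obtain ⟨U, hU, hpU, hqU, hshift⟩ := exists_shift_notMem (hq.trans hp)
  have hmem :
      insert (insert q (U.erase p)) (T.erase U) ∈ powersetCard N (powersetCard k univ) := by
    refine mem_powersetCard.mpr ⟨insert_subset ?_ ((erase_subset U T).trans hTk), ?_⟩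
    · rw [mem_powersetCard_univ, card_insert_of_notMem (fun h => hqU (mem_of_mem_erase h)),
        card_erase_add_one hpU, hcard U hU]
    · rw [card_insert_of_notMem (fun h => hshift (mem_of_mem_erase h)), card_erase_add_one hU, hTN]
  exact (hmin _ hmem).not_gt (excess_shift_lt hU hpU hqU hshift hp hq)

end SetFamily

theorem pda_symbol_removal_general (t s z : ℕ) :
    ∃ T : Finset (Finset (Fin t)),
      (∀ U ∈ T, U.card = s + 1) ∧
      (∀ j : Fin t, (T.filter (fun U => j ∈ U)).card ≤ z) ∧
      T.card = (if z < (t - 1).choose s then (t / (s + 1)) * z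
                else t.choose (s + 1)) := by
  have hchoose : t * (t - 1).choose s = t.choose (s + 1) * (s + 1) := by
    rcases t with _ | t
    · simp
    · exact Nat.add_one_mul_choose_eq t s
  suffices h : ∀ N, N * (s + 1) ≤ t * z → N ≤ t.choose (s + 1) →
      ∃ T : Finset (Finset (Fin t)), (∀ U ∈ T, #U = s + 1) ∧
        (∀ j, SetFamily.degree T j ≤ z) ∧ #T = N by
    split_ifs with hz
    · have hm : t / (s + 1) * z * (s + 1) ≤ t * z := by
        rw [mul_right_comm]; exact Nat.mul_le_mul_right z (Nat.div_mul_le_self t (s + 1))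
      refine h _ hm (Nat.le_of_mul_le_mul_right ?_ s.succ_pos)
      rw [← hchoose]; exact hm.trans (Nat.mul_le_mul_left t hz.le)
    · rw [not_lt] at hz
      exact h _ (hchoose ▸ Nat.mul_le_mul_left t hz) le_rfl
  intro N hsum hN
  simpa only [Fintype.card_fin] using
    SetFamily.exists_uniform_family_degree_le (α := Fin t) (k := s + 1) (z := z)
      (by simpa only [Fintype.card_fin]) (by simpa only [Fintype.card_fin])

/-- For the (s+1)-regular PDA B_{(s,i)} on t columns (whose
symbols are the (s+1)-subsets of [t], the symbol U appearing precisely in the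
columns j ∈ U) and a positive integer z, there is a set T of symbols such that
every column contains at most z symbols of T, with
|T| = ⌊t/(s+1)⌋·z if z < C(t−1,s) and |T| = C(t,s+1) if z ≥ C(t−1,s). -/
theorem pda_symbol_removal (t s z : ℕ) (ht : 2 ≤ t) (hs1 : 1 ≤ s)
    (hs : s ≤ t - 1) (hz : 0 < z) :
    ∃ T : Finset (Finset (Fin t)),
      (∀ U ∈ T, U.card = s + 1) ∧
      (∀ j : Fin t, (T.filter (fun U => j ∈ U)).card ≤ z) ∧
      T.card = (if z < (t - 1).choose s then (t / (s + 1)) * z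
                else t.choose (s + 1)) :=
  pda_symbol_removal_general t s z
end
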